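/- Consider the alternating projection iteration in ℝ²: with A = (2, 0), L_{k+1} = P_B((L_k − S_k + A)/2) and S_{k+1} = P_B((S_k − L_k + A)/2), starting from L_0 = (√2, √2) and S_0 = (√2, −√2). Then for every k ≥ 1, L_k = (√(2k−1)/√(2k+1), √2/√(2k+1)) and S_k = (√(2k−1)/√(2k+1), −√2/√(2k+1)). -/

import Mathlib

/-!
Both iterates stay mirror images of each other across the first axis: if `L_k = (a, b)` and
`S_k = (a, -b)`, the two points being projected are `(1, ±b)`, whose projections are
`(1, ±b) / √(1 + b²)`. The first coordinates therefore agree again, and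
`b_k = √2 / √(2k+1)` holds for every `k ≥ 0` since `1 + 2/c = (c+2)/c`.
-/

noncomputable def vec2 (a b : ℝ) : EuclideanSpace ℝ (Fin 2) := WithLp.toLp 2 ![a, b]

noncomputable def ballProj (x : EuclideanSpace ℝ (Fin 2)) : EuclideanSpace ℝ (Fin 2) :=
  if ‖x‖ ≤ 1 then x else ‖x‖⁻¹ • x

open Real

lemma vec2_add_vec2 (a b c d : ℝ) : vec2 a b + vec2 c d = vec2 (a + c) (b + d) := by
  ext i; fin_cases i <;> simp [vec2]

lemma vec2_sub_vec2 (a b c d : ℝ) : vec2 a b - vec2 c d = vec2 (a - c) (b - d) := by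
  ext i; fin_cases i <;> simp [vec2]

lemma smul_vec2 (c a b : ℝ) : c • vec2 a b = vec2 (c * a) (c * b) := by
  ext i; fin_cases i <;> simp [vec2]

lemma norm_vec2 (a b : ℝ) : ‖vec2 a b‖ = √(a ^ 2 + b ^ 2) := by
  simp [EuclideanSpace.norm_eq, vec2, Fin.sum_univ_two]

lemma ballProj_of_one_lt_norm {x : EuclideanSpace ℝ (Fin 2)} (hx : 1 < ‖x‖) :
    ballProj x = ‖x‖⁻¹ • x :=
  if_neg hx.not_ge

lemma half_smul_vec2_sub_vec2_add (a b c : ℝ) :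
    (1 / 2 : ℝ) • (vec2 a b - vec2 a c + vec2 2 0) = vec2 1 ((b - c) / 2) := by
  rw [vec2_sub_vec2, vec2_add_vec2, smul_vec2]
  congr 1 <;> ring

lemma ballProj_vec2_one {b : ℝ} (hb : b ≠ 0) :
    ballProj (vec2 1 b) = vec2 (1 / √(1 + b ^ 2)) (b / √(1 + b ^ 2)) := by
  have hnorm : ‖vec2 1 b‖ = √(1 + b ^ 2) := by rw [norm_vec2, one_pow]
  have hlt : 1 < ‖vec2 1 b‖ := by
    rw [hnorm, lt_sqrt zero_le_one]
    simpa using pow_pos (abs_pos.mpr hb) 2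
  rw [ballProj_of_one_lt_norm hlt, hnorm, smul_vec2]
  congr 1 <;> ring

lemma ballProj_vec2_one_neg {b : ℝ} (hb : b ≠ 0) :
    ballProj (vec2 1 (-b)) = vec2 (1 / √(1 + b ^ 2)) (-(b / √(1 + b ^ 2))) := by
  rw [ballProj_vec2_one (neg_ne_zero.mpr hb), neg_sq, neg_div]

lemma sqrt_one_add_sq_sqrt_two_div {c : ℝ} (hc : 0 < c) :
    √(1 + (√2 / √c) ^ 2) = √(c + 2) / √c := by
  have hsq : 1 + (√2 / √c) ^ 2 = (c + 2) / c := by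
    rw [div_pow, sq_sqrt zero_le_two, sq_sqrt hc.le]
    field_simp
  rw [hsq, sqrt_div' _ hc.le]

lemma ballProj_half_smul_mirror {a b c : ℝ} (hc : 0 < c) (hb : b = √2 / √c) :
    ballProj ((1 / 2 : ℝ) • (vec2 a b - vec2 a (-b) + vec2 2 0))
        = vec2 (√c / √(c + 2)) (√2 / √(c + 2)) ∧
      ballProj ((1 / 2 : ℝ) • (vec2 a (-b) - vec2 a b + vec2 2 0))
        = vec2 (√c / √(c + 2)) (-(√2 / √(c + 2))) := by
  have hb0 : b ≠ 0 := by rw [hb]; positivity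
  have hsc : √c ≠ 0 := by positivity
  have hfst : 1 / √(1 + b ^ 2) = √c / √(c + 2) := by
    rw [hb, sqrt_one_add_sq_sqrt_two_div hc, one_div_div]
  have hsnd : b / √(1 + b ^ 2) = √2 / √(c + 2) := by
    rw [hb, sqrt_one_add_sq_sqrt_two_div hc, div_div_div_cancel_right₀ hsc]
  have hL : (b - -b) / 2 = b := by ring
  have hS : (-b - b) / 2 = -b := by ring
  rw [half_smul_vec2_sub_vec2_add, half_smul_vec2_sub_vec2_add, hL, hS,
    ballProj_vec2_one hb0, ballProj_vec2_one_neg hb0, hfst, hsnd]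
  exact ⟨rfl, rfl⟩

section Iteration

variable {L S : ℕ → EuclideanSpace ℝ (Fin 2)}
  (hLrec : ∀ k : ℕ, L (k + 1) = ballProj ((1 / 2 : ℝ) • (L k - S k + vec2 2 0)))
  (hSrec : ∀ k : ℕ, S (k + 1) = ballProj ((1 / 2 : ℝ) • (S k - L k + vec2 2 0)))
include hLrec hSrec

lemma iterates_succ_of_mirror {k : ℕ} {a : ℝ}
    (hL : L k = vec2 a (√2 / √(2 * k + 1))) (hS : S k = vec2 a (-(√2 / √(2 * k + 1)))) :
    L (k + 1) = vec2 (√(2 * k + 1) / √(2 * k + 3)) (√2 / √(2 * k + 3)) ∧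
      S (k + 1) = vec2 (√(2 * k + 1) / √(2 * k + 3)) (-(√2 / √(2 * k + 3))) := by
  have hc : (2 * k + 1 : ℝ) + 2 = 2 * k + 3 := by ring
  rw [hLrec, hSrec, hL, hS, ← hc]
  exact ballProj_half_smul_mirror (by positivity) rfl

lemma iterates_mirror (hL0 : L 0 = vec2 √2 √2) (hS0 : S 0 = vec2 √2 (-√2)) (k : ℕ) :
    ∃ a, L k = vec2 a (√2 / √(2 * k + 1)) ∧ S k = vec2 a (-(√2 / √(2 * k + 1))) := by
  induction k with
  | zero => exact ⟨√2, by simpa using hL0, by simpa using hS0⟩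
  | succ k ih =>
    obtain ⟨a, hL, hS⟩ := ih
    refine ⟨√(2 * k + 1) / √(2 * k + 3), ?_⟩
    push_cast
    rw [show (2 * ((k : ℝ) + 1) + 1) = 2 * k + 3 by ring]
    exact iterates_succ_of_mirror hLrec hSrec hL hS

end Iteration

/-- Closed form of the alternating projection iterates for the feasibility problem
`‖L‖ ≤ 1`, `‖S‖ ≤ 1`, `L + S = (2,0)` started from `L₀ = (√2, √2)`, `S₀ = (√2, −√2)`:
for every `k ≥ 1`, `L_k = (√(2k−1)/√(2k+1), √2/√(2k+1))` and
`S_k = (√(2k−1)/√(2k+1), −√2/√(2k+1))`. -/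
theorem stmt_5 (L S : ℕ → EuclideanSpace ℝ (Fin 2))
    (hL0 : L 0 = vec2 (Real.sqrt 2) (Real.sqrt 2))
    (hS0 : S 0 = vec2 (Real.sqrt 2) (-Real.sqrt 2))
    (hLrec : ∀ k : ℕ, L (k + 1) = ballProj ((1 / 2 : ℝ) • (L k - S k + vec2 2 0)))
    (hSrec : ∀ k : ℕ, S (k + 1) = ballProj ((1 / 2 : ℝ) • (S k - L k + vec2 2 0))) :
    ∀ k : ℕ, 1 ≤ k →
      L k = vec2 (Real.sqrt (2 * (k : ℝ) - 1) / Real.sqrt (2 * (k : ℝ) + 1))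
                 (Real.sqrt 2 / Real.sqrt (2 * (k : ℝ) + 1)) ∧
      S k = vec2 (Real.sqrt (2 * (k : ℝ) - 1) / Real.sqrt (2 * (k : ℝ) + 1))
                 (-(Real.sqrt 2 / Real.sqrt (2 * (k : ℝ) + 1))) := by
  intro k hk
  obtain ⟨n, rfl⟩ := Nat.exists_eq_add_of_le' hk
  obtain ⟨a, hL, hS⟩ := iterates_mirror hLrec hSrec hL0 hS0 n
  push_cast
  rw [show 2 * ((n : ℝ) + 1) - 1 = 2 * n + 1 by ring,
    show 2 * ((n : ℝ) + 1) + 1 = 2 * n + 3 by ring]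
  exact iterates_succ_of_mirror hLrec hSrec hL hS
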